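/- arXiv:2603.00969 — 2 statements merged into one kernel-verified Lean document; each statement's English description precedes it below -/
import Mathlib

section
/- Let D ⊂ ℝⁿ (n ≥ 2) be a domain and let x₀ ∈ ∂D. Let E ⊆ D be a set that is closed in D and nowhere dense in D, and assume D is finitely connected on E, i.e. for every z₀ ∈ E and every neighborhood Ũ of z₀ there is a neighborhood Ṽ ⊆ Ũ of z₀ such that (D ∩ Ṽ) \ E has only finitely many connected components. Assume further that there is m ∈ ℕ, 1 ≤ m < ∞, such that for every neighborhood U of x₀ there is a neighborhood V ⊆ U of x₀ with: (a) V ∩ D is connected, and (b) (V ∩ D) \ E has at most m connected components. Let xₖ, yₖ ∈ D \ E (k = 1,2,…) be sequences both converging to x₀. Then there exist subsequences x_{k_l} and y_{k_l} (l = 1,2,…) and neighborhoods V_l of x₀ with V_l ⊆ B(x₀, 2^{−l}) such that, for every l, the points x_{k_l} and y_{k_l} can be joined by a path γ_l whose image lies in V_l ∩ D and whose image intersects E in at most m − 1 points. -/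
/-!
Given a neighbourhood `U` of `x₀`, take a neighbourhood `V₁ ⊆ U` for which `Ω = (V₁ ∩ D) \ E` has
at most `m` components, and inside it a neighbourhood `V₂` with `V₂ ∩ D` connected: any two points
of `V₂ ∩ (D \ E)` are then joined in `U ∩ D` crossing `E` at most `m - 1` times, and the
subsequences come from `U = B(x₀, 2⁻ˡ)`. As `E` has empty interior, `V₂ ∩ D` lies in the closure
of `Ω`, so by connectedness the components of `Ω`, linked when their closures meet in `V₂ ∩ D`,
form a connected graph on at most `m` vertices; a walk in it crosses `E` at most once per edge,
at a meeting point. A meeting point `z ∈ E` is reached from each component by a path meeting `E`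
only at `z`: finite connectedness at `z` lets an ultrafilter at `z` pick components of a shrinking
sequence of neighbourhoods that overlap consecutively, and the paths between them concatenate,
infinitely many on `[0, 1)`, to a path ending at `z`.
-/

open Set Metric

open Filter Topology

theorem Set.mem_of_ssubset_succ_of_encard_le {α : Type*} {s : Set α} {m : ℕ} {A : ℕ → Set α}
    {a : α} (hs : s.encard ≤ m) (hA : ∀ j, A j ⊆ s) (hmono : Monotone A) (h0 : (A 0).Nonempty)
    (hgrow : ∀ j, a ∉ A j → A j ⊂ A (j + 1)) : a ∈ A (m - 1) := by
  have hfin : ∀ j, (A j).Finite := fun j => (finite_of_encard_le_coe hs).subset (hA j)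
  have hlt : ∀ j, a ∉ A j → (A j).encard < (A (j + 1)).encard := fun j ha =>
    (hfin j).encard_lt_encard (hgrow j ha)
  have hcard : ∀ j, a ∉ A j → (j + 1 : ℕ∞) ≤ (A j).encard := by
    intro j ha
    induction j with
    | zero => simpa using h0
    | succ j ih =>
      have ha' : a ∉ A j := fun h => ha (hmono j.le_succ h)
      push_cast
      exact Order.add_one_le_of_lt ((ih ha').trans_lt (hlt j ha'))
  by_contra ha
  have := (Order.add_one_le_of_lt ((hcard _ ha).trans_lt (hlt _ ha))).trans
    ((encard_le_encard (hA _)).trans hs)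
  norm_cast at this
  omega

section InfiniteConcatenation

variable {X : Type*} [TopologicalSpace X] {q : ℕ → X}

namespace Path

noncomputable def seqConcat (π : ∀ j, Path (q j) (q (j + 1))) (s : ℝ) : X :=
  (π ⌊s⌋₊).extend (s - ⌊s⌋₊)

variable (π : ∀ j, Path (q j) (q (j + 1)))

theorem seqConcat_of_nonpos {s : ℝ} (hs : s ≤ 0) : seqConcat π s = q 0 := by
  rw [seqConcat, Nat.floor_of_nonpos hs, Nat.cast_zero, sub_zero, extend_of_le_zero _ hs]

theorem seqConcat_eq_of_mem_Icc {j : ℕ} {s : ℝ} (hs : s ∈ Icc (j : ℝ) (j + 1)) :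
    seqConcat π s = (π j).extend (s - j) := by
  rcases hs.2.lt_or_eq with h | rfl
  · rw [seqConcat, Nat.floor_eq_on_Ico j s ⟨hs.1, h⟩]
  · have : ⌊(j : ℝ) + 1⌋₊ = j + 1 := by exact_mod_cast Nat.floor_natCast (j + 1)
    simp [seqConcat, this]

theorem seqConcat_mem_range (s : ℝ) : seqConcat π s ∈ range (π ⌊s⌋₊) := by
  rw [← extend_range]
  exact mem_range_self _

theorem continuousOn_seqConcat_Iic (j : ℕ) : ContinuousOn (seqConcat π) (Iic j) := by
  induction j with
  | zero =>
    exact continuousOn_const.congr fun s hs => seqConcat_of_nonpos π (by simpa using hs)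
  | succ j ih =>
    have hpiece : ContinuousOn (seqConcat π) (Icc j (j + 1)) :=
      ((π j).continuous_extend.comp (continuous_id.sub continuous_const)).continuousOn.congr
        fun s hs => seqConcat_eq_of_mem_Icc π hs
    rw [Nat.cast_succ, ← Iic_union_Icc_eq_Iic (by linarith : (j : ℝ) ≤ j + 1)]
    exact ih.union_of_isClosed hpiece isClosed_Iic isClosed_Icc

theorem continuous_seqConcat : Continuous (seqConcat π) :=
  continuous_iff_continuousAt.2 fun s => (continuousOn_seqConcat_Iic π (⌊s⌋₊ + 1)).continuousAt
    (Iic_mem_nhds (by exact_mod_cast Nat.lt_floor_add_one s))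

theorem tendsto_seqConcat_atTop {z : X}
    (hπ : Tendsto (fun j => range (π j)) atTop (𝓝 z).smallSets) :
    Tendsto (seqConcat π) atTop (𝓝 z) := fun U hU =>
  (tendsto_nat_floor_atTop.eventually (tendsto_smallSets_iff.1 hπ U hU)).mono fun s hs =>
    hs (seqConcat_mem_range π s)

end Path

theorem tendsto_div_one_sub_nhdsLT_one : Tendsto (fun t : ℝ => t / (1 - t)) (𝓝[<] 1) atTop := by
  have h : Tendsto (fun t : ℝ => 1 - t) (𝓝[<] 1) (𝓝[>] 0) := by
    refine tendsto_nhdsWithin_iff.2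
      ⟨?_, eventually_nhdsWithin_of_forall fun t (ht : t < 1) => sub_pos.2 ht⟩
    exact tendsto_nhdsWithin_of_tendsto_nhds
      (by simpa using (tendsto_id (x := 𝓝 (1 : ℝ))).const_sub 1)
  exact (tendsto_nhdsWithin_of_tendsto_nhds tendsto_id).pos_mul_atTop one_pos
    (tendsto_inv_nhdsGT_zero.comp h)

theorem joinedIn_of_tendsto_smallSets (π : ∀ j, Path (q j) (q (j + 1))) {z : X}
    (hπ : Tendsto (fun j => range (π j)) atTop (𝓝 z).smallSets) :
    JoinedIn (insert z (⋃ j, range (π j))) (q 0) z := by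
  set f : ℝ → X := fun t => if t < 1 then Path.seqConcat π (t / (1 - t)) else z
  have hf : ∀ t < 1, f =ᶠ[𝓝 t] fun t => Path.seqConcat π (t / (1 - t)) := fun t ht =>
    (eventually_lt_nhds ht).mono fun s hs => if_pos hs
  refine JoinedIn.ofLine (f := f) (fun t ht => ?_) (by simp [f, Path.seqConcat_of_nonpos])
    (by simp [f]) ?_
  · rcases ht.2.lt_or_eq with ht1 | rfl
    · refine (ContinuousAt.congr ?_ (hf t ht1).symm).continuousWithinAt
      exact (Path.continuous_seqConcat π).continuousAt.comp
        (continuousAt_id.div (continuousAt_const.sub continuousAt_id) (sub_ne_zero.2 ht1.ne'))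
    · refine (continuousWithinAt_Iio_iff_Iic.1 ?_).mono fun t ht => ht.2
      have hz : f 1 = z := by simp [f]
      rw [ContinuousWithinAt, hz]
      exact ((Path.tendsto_seqConcat_atTop π hπ).comp tendsto_div_one_sub_nhdsLT_one).congr'
        (eventually_nhdsWithin_of_forall fun t ht => (if_pos ht).symm)
  · rintro _ ⟨t, -, rfl⟩
    by_cases ht : t < 1
    · exact mem_insert_of_mem _
        (mem_iUnion.2 ⟨_, by simpa [f, ht] using Path.seqConcat_mem_range π _⟩)
    · simp [f, ht]

end InfiniteConcatenation

section Components

variable {X : Type*} [TopologicalSpace X]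

def componentsIn (S : Set X) : Set (Set X) :=
  {C | ∃ x ∈ S, C = connectedComponentIn S x}

theorem sUnion_componentsIn (S : Set X) : ⋃₀ componentsIn S = S := by
  refine subset_antisymm (sUnion_subset ?_) fun x hx =>
    ⟨_, ⟨x, hx, rfl⟩, mem_connectedComponentIn hx⟩
  rintro _ ⟨x, -, rfl⟩
  exact connectedComponentIn_subset S x

theorem isPreconnected_of_mem_componentsIn {S C : Set X} (hC : C ∈ componentsIn S) :
    IsPreconnected C := by
  obtain ⟨x, -, rfl⟩ := hC
  exact isPreconnected_connectedComponentIn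

theorem subset_of_mem_componentsIn {S C : Set X} (hC : C ∈ componentsIn S) : C ⊆ S := by
  obtain ⟨x, -, rfl⟩ := hC
  exact connectedComponentIn_subset S x

theorem nonempty_of_mem_componentsIn {S C : Set X} (hC : C ∈ componentsIn S) : C.Nonempty := by
  obtain ⟨x, hx, rfl⟩ := hC
  exact ⟨x, mem_connectedComponentIn hx⟩

theorem connectedComponentIn_mem_componentsIn {S : Set X} {x : X} (hx : x ∈ S) :
    connectedComponentIn S x ∈ componentsIn S :=
  ⟨x, hx, rfl⟩

/-- The paper's "`D` is finitely connected at `z`" is `FinitelyConnectedAt (D \ E) z`. -/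
def FinitelyConnectedAt (O : Set X) (z : X) : Prop :=
  ∀ U ∈ 𝓝 z, ∃ V ∈ 𝓝 z, V ⊆ U ∧ (componentsIn (O ∩ V)).Finite

theorem FinitelyConnectedAt.inter {O N : Set X} {z : X} (h : FinitelyConnectedAt O z)
    (hN : N ∈ 𝓝 z) : FinitelyConnectedAt (N ∩ O) z := fun U hU => by
  obtain ⟨V, hV, hVU, hfin⟩ := h (U ∩ N) (inter_mem hU hN)
  refine ⟨V, hV, hVU.trans inter_subset_left, ?_⟩
  rwa [inter_assoc, inter_left_comm, inter_eq_right.2 (hVU.trans inter_subset_right)]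

theorem IsPreconnected.exists_inter_closure_inter_closure {T : Set X} (hT : IsPreconnected T)
    {𝒞 𝒜 : Set (Set X)} (h𝒞 : 𝒞.Finite) (hcover : T ⊆ ⋃ C ∈ 𝒞, closure C) {A B : Set X}
    {a b : X} (hA : A ∈ 𝒞 ∩ 𝒜) (hB : B ∈ 𝒞 \ 𝒜) (ha : a ∈ T ∩ closure A)
    (hb : b ∈ T ∩ closure B) :
    ∃ C ∈ 𝒞 ∩ 𝒜, ∃ C' ∈ 𝒞 \ 𝒜, (T ∩ (closure C ∩ closure C')).Nonempty := by
  have hcover' : T ⊆ (⋃ C ∈ 𝒞 ∩ 𝒜, closure C) ∪ ⋃ C ∈ 𝒞 \ 𝒜, closure C := by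
    rw [← biUnion_union, inter_union_sdiff]
    exact hcover
  obtain ⟨w, hwT, hwA, hwB⟩ := isPreconnected_closed_iff.1 hT _ _
    ((h𝒞.subset inter_subset_left).isClosed_biUnion fun _ _ => isClosed_closure)
    ((h𝒞.subset sdiff_subset).isClosed_biUnion fun _ _ => isClosed_closure) hcover'
    ⟨a, ha.1, mem_biUnion hA ha.2⟩ ⟨b, hb.1, mem_biUnion hB hb.2⟩
  obtain ⟨C, hC, hwC⟩ := mem_iUnion₂.1 hwA
  obtain ⟨C', hC', hwC'⟩ := mem_iUnion₂.1 hwB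
  exact ⟨C, hC, C', hC', w, hwT, hwC, hwC'⟩

variable [LocallyPathConnectedSpace X]

theorem joinedIn_of_isPreconnected {K F : Set X} (hK : IsPreconnected K) (hF : IsOpen F)
    (hKF : K ⊆ F) {a b : X} (ha : a ∈ K) (hb : b ∈ K) : JoinedIn F a b := by
  have hpath : IsPathConnected (connectedComponentIn F a) :=
    hF.connectedComponentIn.isConnected_iff_isPathConnected.1
      (isConnected_connectedComponentIn_iff.2 (hKF ha))
  exact (hpath.joinedIn a (mem_connectedComponentIn (hKF ha)) b
    (hK.subset_connectedComponentIn ha hKF hb)).mono (connectedComponentIn_subset F a)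

theorem subset_connectedComponentIn_of_mem_closure {K F : Set X}
    (hK : IsPreconnected K) (hF : IsOpen F) (hKF : K ⊆ F) {z : X} (hzF : z ∈ F)
    (hz : z ∈ closure K) : K ⊆ connectedComponentIn F z := by
  obtain ⟨y, hyz, hyK⟩ := mem_closure_iff_nhds.1 hz _
    (hF.connectedComponentIn.mem_nhds (mem_connectedComponentIn hzF))
  rw [connectedComponentIn_eq hyz]
  exact hK.subset_connectedComponentIn hyK hKF

end Components


theorem FinitelyConnectedAt.exists_joinedIn_of_mem_closure {X : Type*} [TopologicalSpace X]
    [FirstCountableTopology X] [LocallyPathConnectedSpace X] {O C : Set X} {z : X}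
    (hfc : FinitelyConnectedAt O z) (hO : IsOpen O) (hCO : C ⊆ O) (hz : z ∈ closure C) :
    ∃ a ∈ C, JoinedIn (insert z O) a z := by
  obtain ⟨𝒰, hC𝒰, h𝒰⟩ := mem_closure_iff_ultrafilter.1 hz
  obtain ⟨B, hB⟩ := (𝓝 z).exists_antitone_basis
  choose V hV hVB hVfin using fun j => hfc _ (interior_mem_nhds.2 (hB.mem j))
  -- `𝒰` picks one of the finitely many components of each `O ∩ V j`; any two picks meet.
  have hK : ∀ j, ∃ K ∈ componentsIn (O ∩ V j), K ∈ 𝒰 := fun j =>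
    (Ultrafilter.finite_sUnion_mem_iff (hVfin j)).1 <| by
      rw [sUnion_componentsIn]
      exact inter_mem (mem_of_superset hC𝒰 hCO) (h𝒰 (hV j))
  choose K hK hK𝒰 using hK
  choose q hq using fun j =>
    Ultrafilter.nonempty_of_mem (inter_mem (inter_mem hC𝒰 (hK𝒰 j)) (hK𝒰 (j + 1)))
  have hjoin : ∀ j, JoinedIn (O ∩ interior (B (j + 1))) (q j) (q (j + 1)) := fun j =>
    joinedIn_of_isPreconnected (isPreconnected_of_mem_componentsIn (hK (j + 1)))
      (hO.inter isOpen_interior)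
      ((subset_of_mem_componentsIn (hK (j + 1))).trans (inter_subset_inter_right _ (hVB (j + 1))))
      (hq j).2 (hq (j + 1)).1.2
  have hrange : ∀ j, range (hjoin j).somePath ⊆ O ∩ B j := fun j =>
    range_subset_iff.2 fun t => (inter_subset_inter_right _
      (interior_subset.trans (hB.antitone j.le_succ))) ((hjoin j).somePath_mem t)
  refine ⟨q 0, (hq 0).1.1, (joinedIn_of_tendsto_smallSets _ ?_).mono
    (insert_subset_insert (iUnion_subset fun j => (hrange j).trans inter_subset_left))⟩
  exact hB.tendsto_smallSets.smallSets_mono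
    (Eventually.of_forall fun j => (hrange j).trans inter_subset_right)

section MeetingAtMost

variable {X : Type*} [TopologicalSpace X] {W E : Set X} {a b c : X}

def JoinedInMeetingAtMost (W E : Set X) (j : ℕ) (a b : X) : Prop :=
  ∃ p : Path a b, range p ⊆ W ∧ (range p ∩ E).encard ≤ j

theorem JoinedInMeetingAtMost.trans {i j : ℕ} (hab : JoinedInMeetingAtMost W E i a b)
    (hbc : JoinedInMeetingAtMost W E j b c) : JoinedInMeetingAtMost W E (i + j) a c := by
  obtain ⟨p, hpW, hpE⟩ := hab
  obtain ⟨p', hp'W, hp'E⟩ := hbc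
  refine ⟨p.trans p', by rw [Path.trans_range]; exact union_subset hpW hp'W, ?_⟩
  rw [Path.trans_range, union_inter_distrib_right, Nat.cast_add]
  exact (encard_union_le _ _).trans (add_le_add hpE hp'E)

theorem JoinedInMeetingAtMost.mono {W' : Set X} {i j : ℕ} (h : JoinedInMeetingAtMost W E i a b)
    (hW : W ⊆ W') (hij : i ≤ j) : JoinedInMeetingAtMost W' E j a b := by
  obtain ⟨p, hpW, hpE⟩ := h
  exact ⟨p, hpW.trans hW, hpE.trans (by exact_mod_cast hij)⟩

theorem JoinedIn.joinedInMeetingAtMost {F : Set X} {j : ℕ} (h : JoinedIn (F ∪ W \ E) a b)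
    (hFW : F ⊆ W) (hF : F.encard ≤ j) : JoinedInMeetingAtMost W E j a b := by
  obtain ⟨p, hp⟩ := h
  refine ⟨p, range_subset_iff.2 fun t => (hp t).elim (fun h => hFW h) fun h => h.1,
    (encard_le_encard ?_).trans hF⟩
  rintro _ ⟨⟨t, rfl⟩, hE⟩
  exact (hp t).resolve_right fun h => h.2 hE

variable [FirstCountableTopology X] [LocallyPathConnectedSpace X]

theorem joinedInMeetingAtMost_one_of_mem_closure {K K' : Set X} {z : X} (hWE : IsOpen (W \ E))
    (hzW : z ∈ W) (hfc : z ∈ E → FinitelyConnectedAt (W \ E) z) (hK : IsPreconnected K)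
    (hK' : IsPreconnected K') (hKW : K ⊆ W \ E) (hK'W : K' ⊆ W \ E) (hzK : z ∈ closure K)
    (hzK' : z ∈ closure K') (ha : a ∈ K) (hb : b ∈ K') : JoinedInMeetingAtMost W E 1 a b := by
  suffices h : JoinedIn (insert z (W \ E)) a b from
    h.joinedInMeetingAtMost (F := {z}) (singleton_subset_iff.2 hzW) (encard_singleton z).le
  by_cases hzE : z ∈ E
  · obtain ⟨a', ha', ha'z⟩ := (hfc hzE).exists_joinedIn_of_mem_closure hWE hKW hzK
    obtain ⟨b', hb', hb'z⟩ := (hfc hzE).exists_joinedIn_of_mem_closure hWE hK'W hzK'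
    have haa' := (joinedIn_of_isPreconnected hK hWE hKW ha ha').mono (subset_insert z _)
    have hb'b := (joinedIn_of_isPreconnected hK' hWE hK'W hb' hb).mono (subset_insert z _)
    exact ((haa'.trans ha'z).trans hb'z.symm).trans hb'b
  · have hzWE : z ∈ W \ E := ⟨hzW, hzE⟩
    exact (joinedIn_of_isPreconnected isPreconnected_connectedComponentIn hWE
      (connectedComponentIn_subset _ _)
      (subset_connectedComponentIn_of_mem_closure hK hWE hKW hzWE hzK ha)
      (subset_connectedComponentIn_of_mem_closure hK' hWE hK'W hzWE hzK' hb)).mono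
      (subset_insert z _)

end MeetingAtMost

section FiniteComponents

variable {X : Type*} [TopologicalSpace X] [FirstCountableTopology X]
  [LocallyPathConnectedSpace X]

theorem joinedInMeetingAtMost_of_subset_closure {W E Ω T : Set X} {m : ℕ} {a b : X}
    (hWE : IsOpen (W \ E)) (hΩW : Ω ⊆ W \ E) (hΩ : (componentsIn Ω).encard ≤ m)
    (hT : IsPreconnected T) (hTW : T ⊆ W) (hTΩ : T ⊆ closure Ω)
    (hfc : ∀ z ∈ T ∩ E, FinitelyConnectedAt (W \ E) z) (ha : a ∈ T ∩ Ω) (hb : b ∈ T ∩ Ω) :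
    JoinedInMeetingAtMost W E (m - 1) a b := by
  set 𝒞 := componentsIn Ω
  have h𝒞 : 𝒞.Finite := finite_of_encard_le_coe hΩ
  have hcover : T ⊆ ⋃ C ∈ 𝒞, closure C := by
    rwa [← h𝒞.closure_sUnion, sUnion_componentsIn]
  have hCW : ∀ C ∈ 𝒞, C ⊆ W \ E := fun C hC => (subset_of_mem_componentsIn hC).trans hΩW
  have hCa : connectedComponentIn Ω a ∈ 𝒞 := connectedComponentIn_mem_componentsIn ha.2
  have hCb : connectedComponentIn Ω b ∈ 𝒞 := connectedComponentIn_mem_componentsIn hb.2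
  set A : ℕ → Set (Set X) := fun j => {C ∈ 𝒞 | ∀ w ∈ C, JoinedInMeetingAtMost W E j a w}
  have hmono : Monotone A := fun i j hij C hC =>
    ⟨hC.1, fun w hw => (hC.2 w hw).mono subset_rfl hij⟩
  have hA0 : connectedComponentIn Ω a ∈ A 0 := ⟨hCa, fun w hw =>
    ((joinedIn_of_isPreconnected isPreconnected_connectedComponentIn hWE (hCW _ hCa)
      (mem_connectedComponentIn ha.2) hw).mono subset_union_right).joinedInMeetingAtMost
      (empty_subset _) (by simp)⟩
  -- `T` is connected, so some component outside `A j` touches one inside within `T`.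
  have hgrow : ∀ j, connectedComponentIn Ω b ∉ A j → A j ⊂ A (j + 1) := by
    intro j hbj
    obtain ⟨C, hC, C', hC', z, hzT, hzC, hzC'⟩ := hT.exists_inter_closure_inter_closure h𝒞 hcover
      ⟨hCa, hmono j.zero_le hA0⟩ ⟨hCb, hbj⟩
      ⟨ha.1, subset_closure (mem_connectedComponentIn ha.2)⟩
      ⟨hb.1, subset_closure (mem_connectedComponentIn hb.2)⟩
    refine (ssubset_iff_of_subset (hmono j.le_succ)).2 ⟨C', ⟨hC'.1, fun w hw => ?_⟩, hC'.2⟩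
    obtain ⟨c, hc⟩ := nonempty_of_mem_componentsIn hC.1
    exact (hC.2.2 c hc).trans <| joinedInMeetingAtMost_one_of_mem_closure hWE (hTW hzT)
      (fun hzE => hfc z ⟨hzT, hzE⟩) (isPreconnected_of_mem_componentsIn hC.1)
      (isPreconnected_of_mem_componentsIn hC'.1) (hCW C hC.1) (hCW C' hC'.1) hzC hzC' hc hw
  exact (mem_of_ssubset_succ_of_encard_le hΩ (fun j => sep_subset _ _) hmono ⟨_, hA0⟩ hgrow).2 b
    (mem_connectedComponentIn hb.2)

theorem exists_mem_nhds_joinedInMeetingAtMost {D E U : Set X} {x₀ : X} {m : ℕ} (hD : IsOpen D)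
    (hDE : IsOpen (D \ E)) (hE : interior E = ∅) (hfc : ∀ z ∈ E, FinitelyConnectedAt (D \ E) z)
    (hx₀ : ∀ U ∈ 𝓝 x₀, ∃ V ∈ 𝓝 x₀, V ⊆ U ∧ IsConnected (V ∩ D) ∧
      (componentsIn ((V ∩ D) \ E)).encard ≤ m)
    (hU : U ∈ 𝓝 x₀) :
    ∃ V ∈ 𝓝 x₀, ∀ a ∈ V ∩ (D \ E), ∀ b ∈ V ∩ (D \ E),
      JoinedInMeetingAtMost (U ∩ D) E (m - 1) a b := by
  obtain ⟨V₁, hV₁, hV₁U, -, hcard⟩ := hx₀ _ (interior_mem_nhds.2 hU)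
  obtain ⟨V₂, hV₂, hV₂V₁, hconn, -⟩ := hx₀ _ (interior_mem_nhds.2 hV₁)
  have hV₂V₁' : V₂ ⊆ V₁ := hV₂V₁.trans interior_subset
  have hWE : (interior U ∩ D) \ E = interior U ∩ (D \ E) := inter_sdiff_assoc _ _ _
  have hTW : V₂ ∩ D ⊆ interior U ∩ D := inter_subset_inter_left _ (hV₂V₁'.trans hV₁U)
  have hΩ : ∀ {w}, w ∈ V₂ ∩ (D \ E) → w ∈ (V₂ ∩ D) ∩ ((V₁ ∩ D) \ E) := fun hw =>
    ⟨⟨hw.1, hw.2.1⟩, ⟨hV₂V₁' hw.1, hw.2.1⟩, hw.2.2⟩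
  have hTΩ : V₂ ∩ D ⊆ closure ((V₁ ∩ D) \ E) :=
    (inter_subset_inter_left _ hV₂V₁).trans <|
      ((interior_eq_empty_iff_dense_compl.1 hE).open_subset_closure_inter
        (isOpen_interior.inter hD)).trans <|
      closure_mono fun w hw => ⟨⟨interior_subset hw.1.1, hw.1.2⟩, hw.2⟩
  refine ⟨V₂, hV₂, fun a ha b hb => ?_⟩
  refine (joinedInMeetingAtMost_of_subset_closure (W := interior U ∩ D) (Ω := (V₁ ∩ D) \ E)
    (by rw [hWE]; exact isOpen_interior.inter hDE) (fun w hw => ⟨⟨hV₁U hw.1.1, hw.1.2⟩, hw.2⟩)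
    hcard hconn.isPreconnected hTW hTΩ
    (fun z hz => ?_) (hΩ ha) (hΩ hb)).mono (inter_subset_inter_left _ interior_subset) le_rfl
  rw [hWE]
  exact (hfc z hz.2).inter (isOpen_interior.mem_nhds (hTW hz.1).1)

end FiniteComponents

theorem stmt_0_general {n : ℕ}
    (D : Set (EuclideanSpace ℝ (Fin n))) (hDopen : IsOpen D)
    (x₀ : EuclideanSpace ℝ (Fin n))
    (E : Set (EuclideanSpace ℝ (Fin n)))
    -- `E` is closed in `D` :
    (hEclosed : closure E ∩ D = E)
    -- `E` is nowhere dense in `D` (the closure of `E` relative to `D` has empty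
    -- interior relative to the open set `D`) :
    (hEnwd : interior (closure E ∩ D) = ∅)
    -- `D` is finitely connected on `E` :
    (hfc : ∀ z₀ ∈ E, ∀ U ∈ nhds z₀, ∃ V ∈ nhds z₀, V ⊆ U ∧
      {C : Set (EuclideanSpace ℝ (Fin n)) |
        ∃ x ∈ (D ∩ V) \ E, C = connectedComponentIn ((D ∩ V) \ E) x}.Finite)
    (m : ℕ)
    -- the finite-component condition at the boundary point `x₀` :
    (hx₀fc : ∀ U ∈ nhds x₀, ∃ V ∈ nhds x₀, V ⊆ U ∧ IsConnected (V ∩ D) ∧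
      {C : Set (EuclideanSpace ℝ (Fin n)) |
        ∃ x ∈ (V ∩ D) \ E, C = connectedComponentIn ((V ∩ D) \ E) x}.encard ≤ m)
    (x y : ℕ → EuclideanSpace ℝ (Fin n))
    (hx : ∀ k, x k ∈ D \ E) (hy : ∀ k, y k ∈ D \ E)
    (hxconv : Filter.Tendsto x Filter.atTop (nhds x₀))
    (hyconv : Filter.Tendsto y Filter.atTop (nhds x₀)) :
    ∃ k : ℕ → ℕ, StrictMono k ∧
      ∃ V : ℕ → Set (EuclideanSpace ℝ (Fin n)),
        (∀ l, V l ∈ nhds x₀) ∧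
        (∀ l, V l ⊆ ball x₀ ((2 : ℝ) ^ (-(l : ℤ)))) ∧
        (∀ l, x (k l) ∈ V l ∧ y (k l) ∈ V l) ∧
        ∀ l, ∃ γ : ℝ → EuclideanSpace ℝ (Fin n),
          ContinuousOn γ (Icc 0 1) ∧ γ 0 = x (k l) ∧ γ 1 = y (k l) ∧
          γ '' Icc 0 1 ⊆ V l ∩ D ∧ (γ '' Icc 0 1 ∩ E).encard ≤ (m - 1 : ℕ) := by
  have hDE : IsOpen (D \ E) := by
    rw [← hEclosed, sdiff_inter_self_eq_sdiff]
    exact hDopen.sdiff isClosed_closure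
  have hfc' : ∀ z ∈ E, FinitelyConnectedAt (D \ E) z := fun z hz U hU => by
    simpa only [componentsIn, inter_sdiff_right_comm] using hfc z hz U hU
  choose W hW hjoin using fun l : ℕ => exists_mem_nhds_joinedInMeetingAtMost hDopen hDE
    (hEclosed ▸ hEnwd) hfc' hx₀fc (ball_mem_nhds x₀ (zpow_pos two_pos (-(l : ℤ))))
  obtain ⟨k, hk, hkW⟩ := extraction_forall_of_eventually fun l =>
    (hxconv.eventually (hW l)).and (hyconv.eventually (hW l))
  choose p hpV hpE using fun l => hjoin l _ ⟨(hkW l).1, hx _⟩ _ ⟨(hkW l).2, hy _⟩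
  have hrange : ∀ l, (p l).extend '' Icc 0 1 = range (p l) := fun l =>
    (p l).image_extend_of_subset subset_rfl
  refine ⟨k, hk, fun l => ball x₀ (2 ^ (-(l : ℤ))), fun l => ball_mem_nhds _ (by positivity),
    fun l => subset_rfl, fun l => ⟨(hpV l ⟨0, (p l).source⟩).1, (hpV l ⟨1, (p l).target⟩).1⟩,
    fun l => ⟨(p l).extend, (p l).continuous_extend.continuousOn, (p l).extend_zero,
      (p l).extend_one, ?_, ?_⟩⟩
  · exact hrange l ▸ hpV l
  · exact hrange l ▸ hpE l

/-- Lemma 2.1 of the paper: Let `D ⊆ ℝⁿ`, `n ≥ 2`, be a domain,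
`x₀ ∈ ∂D`, and let `E ⊆ D` be closed and nowhere dense in `D` with `D` finitely
connected on `E`; assume the finite-component condition at `x₀` with bound `m`.
If `xₖ, yₖ ∈ D ∖ E` both converge to `x₀`, then there are subsequences and
neighborhoods `V_l ⊆ B(x₀, 2^{-l})` of `x₀` such that `x_{k_l}` and `y_{k_l}`
can be joined by a path in `V_l ∩ D` meeting `E` in at most `m - 1` points. -/
theorem stmt_0 {n : ℕ} (hn : 2 ≤ n)
    (D : Set (EuclideanSpace ℝ (Fin n))) (hDopen : IsOpen D) (hDconn : IsConnected D)
    (x₀ : EuclideanSpace ℝ (Fin n)) (hx₀ : x₀ ∈ frontier D)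
    (E : Set (EuclideanSpace ℝ (Fin n))) (hED : E ⊆ D)
    -- `E` is closed in `D` :
    (hEclosed : closure E ∩ D = E)
    -- `E` is nowhere dense in `D` (the closure of `E` relative to `D` has empty
    -- interior relative to the open set `D`) :
    (hEnwd : interior (closure E ∩ D) = ∅)
    -- `D` is finitely connected on `E` :
    (hfc : ∀ z₀ ∈ E, ∀ U ∈ nhds z₀, ∃ V ∈ nhds z₀, V ⊆ U ∧
      {C : Set (EuclideanSpace ℝ (Fin n)) |
        ∃ x ∈ (D ∩ V) \ E, C = connectedComponentIn ((D ∩ V) \ E) x}.Finite)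
    (m : ℕ) (hm : 1 ≤ m)
    -- the finite-component condition at the boundary point `x₀` :
    (hx₀fc : ∀ U ∈ nhds x₀, ∃ V ∈ nhds x₀, V ⊆ U ∧ IsConnected (V ∩ D) ∧
      {C : Set (EuclideanSpace ℝ (Fin n)) |
        ∃ x ∈ (V ∩ D) \ E, C = connectedComponentIn ((V ∩ D) \ E) x}.encard ≤ m)
    (x y : ℕ → EuclideanSpace ℝ (Fin n))
    (hx : ∀ k, x k ∈ D \ E) (hy : ∀ k, y k ∈ D \ E)
    (hxconv : Filter.Tendsto x Filter.atTop (nhds x₀))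
    (hyconv : Filter.Tendsto y Filter.atTop (nhds x₀)) :
    ∃ k : ℕ → ℕ, StrictMono k ∧
      ∃ V : ℕ → Set (EuclideanSpace ℝ (Fin n)),
        (∀ l, V l ∈ nhds x₀) ∧
        (∀ l, V l ⊆ ball x₀ ((2 : ℝ) ^ (-(l : ℤ)))) ∧
        (∀ l, x (k l) ∈ V l ∧ y (k l) ∈ V l) ∧
        ∀ l, ∃ γ : ℝ → EuclideanSpace ℝ (Fin n),
          ContinuousOn γ (Icc 0 1) ∧ γ 0 = x (k l) ∧ γ 1 = y (k l) ∧
          γ '' Icc 0 1 ⊆ V l ∩ D ∧ (γ '' Icc 0 1 ∩ E).encard ≤ (m - 1 : ℕ) :=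
  stmt_0_general D hDopen x₀ E hEclosed hEnwd hfc m hx₀fc x y hx hy hxconv hyconv
end

section
/- Let n ≥ 2 and let F : ℝⁿ → [0, ∞] be a Lebesgue measurable function. Then ∫_{ℝⁿ∖{0}} F(x/|x|²) · dm(x)/(1 + |x|²)ⁿ = ∫_{ℝⁿ∖{0}} F(y) · dm(y)/(1 + |y|²)ⁿ. In other words, the weighted integral ∫ F(y) (1 + |y|²)^{−n} dm(y) is invariant under precomposition of F with the inversion ψ(x) = x/|x|². -/
/-!
The inversion `ψ = inversion 0 1` is an involution of `ℝⁿ ∖ {0}` whose derivative at `x` is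
`|x|⁻² • (reflection in x^⊥)`, so its Jacobian is `|x|^{-2n}`. Since `|ψ x|² = |x|⁻²`, the weight
transforms as `(1 + |ψ x|²)^{-n} = |x|^{2n} (1 + |x|²)^{-n}`, which exactly cancels the Jacobian
in the change of variables `y = ψ x`.
-/

open MeasureTheory EuclideanGeometry Module Set
open scoped ENNReal

section Inversion

variable {E : Type*} [NormedAddCommGroup E] [InnerProductSpace ℝ E]

theorem inversion_zero_one_apply (x : E) : inversion 0 1 x = (‖x‖ ^ 2)⁻¹ • x := by
  simp [inversion, dist_eq_norm]

theorem norm_inversion_zero_one (x : E) : ‖inversion 0 1 x‖ = ‖x‖⁻¹ := by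
  simpa [dist_eq_norm] using dist_inversion_center (0 : E) x 1

theorem image_inversion_compl_singleton (c : E) {R : ℝ} (hR : R ≠ 0) :
    inversion c R '' {c}ᶜ = {c}ᶜ := by
  rw [(inversion_involutive c hR).image_eq_preimage_symm]
  ext x
  exact not_congr (inversion_eq_center hR)

variable [FiniteDimensional ℝ E]

theorem abs_det_smul_reflection (r : ℝ) (K : Submodule ℝ E) :
    |(r • (K.reflection : E →L[ℝ] E)).det| = |r| ^ finrank ℝ E := by
  have hdet : (r • (K.reflection : E →L[ℝ] E)).det = r ^ finrank ℝ E * (-1) ^ finrank ℝ Kᗮ :=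
    (LinearMap.det_smul r K.reflection.toLinearMap).trans (by rw [Submodule.det_reflection])
  rw [hdet, abs_mul, abs_pow, abs_pow, abs_neg, abs_one, one_pow, mul_one]

theorem lintegral_compl_singleton_inversion [MeasurableSpace E] [BorelSpace E]
    (μ : Measure E) [μ.IsAddHaarMeasure] (c : E) {R : ℝ} (hR : R ≠ 0) (g : E → ℝ≥0∞) :
    ∫⁻ x in {c}ᶜ, ENNReal.ofReal (((R / dist x c) ^ 2) ^ finrank ℝ E) * g (inversion c R x) ∂μ
      = ∫⁻ y in {c}ᶜ, g y ∂μ := by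
  have hs : MeasurableSet ({c}ᶜ : Set E) := (measurableSet_singleton c).compl
  conv_rhs => rw [← image_inversion_compl_singleton c hR]
  rw [lintegral_image_eq_lintegral_abs_det_fderiv_mul μ hs
    (fun x hx => (hasFDerivAt_inversion hx).hasFDerivWithinAt) (inversion_injective c hR).injOn]
  refine setLIntegral_congr_fun hs fun x _ => ?_
  rw [abs_det_smul_reflection, abs_of_nonneg (sq_nonneg _)]

end Inversion

theorem ENNReal.ofReal_mul_div_ofReal_mul {a : ℝ} (ha : 0 < a) (b : ℝ≥0∞) (c : ℝ) :
    ENNReal.ofReal a * (b / ENNReal.ofReal (a * c)) = b / ENNReal.ofReal c := by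
  rw [ENNReal.ofReal_mul ha.le, ← mul_div_assoc,
    ENNReal.mul_div_mul_left _ _ (ENNReal.ofReal_pos.2 ha).ne' ENNReal.ofReal_ne_top]

theorem stmt_6_general {n : ℕ}
    (F : EuclideanSpace ℝ (Fin n) → ℝ≥0∞) :
    ∫⁻ x in {(0 : EuclideanSpace ℝ (Fin n))}ᶜ,
        F ((‖x‖ ^ 2)⁻¹ • x) / ENNReal.ofReal ((1 + ‖x‖ ^ 2) ^ n)
      = ∫⁻ y in {(0 : EuclideanSpace ℝ (Fin n))}ᶜ,
          F y / ENNReal.ofReal ((1 + ‖y‖ ^ 2) ^ n) := by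
  conv_rhs => rw [← lintegral_compl_singleton_inversion volume 0 one_ne_zero]
  refine setLIntegral_congr_fun (measurableSet_singleton 0).compl fun x hx => ?_
  have ht : 0 < ‖x‖ ^ 2 := by have : x ≠ 0 := hx; positivity
  have hweight : (1 + (‖x‖ ^ 2)⁻¹) ^ n = ((‖x‖ ^ 2)⁻¹) ^ n * (1 + ‖x‖ ^ 2) ^ n := by
    rw [← mul_pow, mul_add, mul_one, inv_mul_cancel₀ ht.ne', add_comm]
  rw [finrank_euclideanSpace_fin, dist_zero_right, norm_inversion_zero_one,
    inversion_zero_one_apply, one_div, inv_pow, hweight,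
    ENNReal.ofReal_mul_div_ofReal_mul (by positivity)]

/-- The weighted integral `∫ F(y) (1+|y|²)^{-n} dm(y)` over `ℝⁿ∖{0}`
is invariant under precomposition of `F` with the inversion `ψ(x) = x/|x|²`. -/
theorem stmt_6 {n : ℕ} (hn : 2 ≤ n)
    (F : EuclideanSpace ℝ (Fin n) → ℝ≥0∞) (hF : Measurable F) :
    ∫⁻ x in {(0 : EuclideanSpace ℝ (Fin n))}ᶜ,
        F ((‖x‖ ^ 2)⁻¹ • x) / ENNReal.ofReal ((1 + ‖x‖ ^ 2) ^ n)
      = ∫⁻ y in {(0 : EuclideanSpace ℝ (Fin n))}ᶜ,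
          F y / ENNReal.ofReal ((1 + ‖y‖ ^ 2) ^ n) :=
  stmt_6_general F
end
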